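/- Let λ > -1/2 be a real number. For every integer k ≥ 1, (Γ(2k+1)·(2k+λ)/Γ(2k+2λ)) · ∑_{j=1}^{k} (2j+λ-1)·Γ(2j+2λ-1)/Γ(2j) = 2k(k+λ)(2k+λ)/(2λ+1). -/

import Mathlib

/-!
Write `α_j² = (2j + λ - 1) Γ(2j + 2λ - 1) / Γ(2j)`, `β_k² = Γ(2k + 1)(2k + λ) / Γ(2k + 2λ)` and
`r_j = gammaRatio λ j = Γ(2j + 2λ + 1) / Γ(2j + 2)`, so that `α_{j+1}² = (2j + λ + 1) r_j`.
`Γ(s + 1) = s Γ(s)` gives the recurrence `(j + 1)(2j + 3) r_{j+1} = (j + λ + 1)(2j + 2λ + 1) r_j`,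
which telescopes the sum: `(2λ + 1) ∑_{j=1}^k α_j² = k(2k + 1) r_k`. On the other side
`β_k² (2k + 1) r_k = (2k + λ)(2k + 2λ)`, so `r_k` cancels from the product.
-/

open Real Finset

lemma Gamma_add_two {s : ℝ} (hs : 0 < s) : Gamma (s + 2) = (s + 1) * s * Gamma s := by
  rw [show s + 2 = s + 1 + 1 by ring, Gamma_add_one (by linarith), Gamma_add_one hs.ne', mul_assoc]

lemma Gamma_div_mul_Gamma_add_one_div {x y : ℝ} (hx : 0 < x) (hy : 0 < y) :
    Gamma y / Gamma x * (Gamma (x + 1) / Gamma (y + 1)) = x / y := by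
  have hΓx := (Gamma_pos_of_pos hx).ne'
  have hΓy := (Gamma_pos_of_pos hy).ne'
  rw [Gamma_add_one hx.ne', Gamma_add_one hy.ne']
  field_simp

noncomputable def gammaRatio (lam : ℝ) (j : ℕ) : ℝ :=
  Gamma (2 * j + 2 * lam + 1) / Gamma (2 * j + 2)

section

variable {lam : ℝ}

lemma gammaRatio_succ (hlam : -1 / 2 < lam) (j : ℕ) :
    (j + 1) * (2 * j + 3) * gammaRatio lam (j + 1) =
      (j + lam + 1) * (2 * j + 2 * lam + 1) * gammaRatio lam j := by
  have hj : (0 : ℝ) ≤ j := j.cast_nonneg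
  have hnum : 2 * ((j : ℝ) + 1) + 2 * lam + 1 = 2 * j + 2 * lam + 1 + 2 := by ring
  have hden : 2 * ((j : ℝ) + 1) + 2 = 2 * j + 2 + 2 := by ring
  have hΓ : Gamma (2 * (j : ℝ) + 2) ≠ 0 := (Gamma_pos_of_pos (by linarith)).ne'
  rw [gammaRatio, gammaRatio, Nat.cast_succ, hnum, hden, Gamma_add_two (by linarith),
    Gamma_add_two (by linarith)]
  field_simp
  ring

lemma mul_sum_Icc_alpha_sq (hlam : -1 / 2 < lam) (k : ℕ) :
    (2 * lam + 1) * ∑ j ∈ Icc 1 k,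
        (2 * (j : ℝ) + lam - 1) * Gamma (2 * (j : ℝ) + 2 * lam - 1) / Gamma (2 * (j : ℝ)) =
      k * (2 * k + 1) * gammaRatio lam k := by
  induction k with
  | zero => simp
  | succ k ih =>
    have hα : (2 * ((k + 1 : ℕ) : ℝ) + lam - 1) * Gamma (2 * ((k + 1 : ℕ) : ℝ) + 2 * lam - 1) /
        Gamma (2 * ((k + 1 : ℕ) : ℝ)) = (2 * k + lam + 1) * gammaRatio lam k := by
      rw [gammaRatio, mul_div_assoc]
      push_cast
      ring_nf
    rw [sum_Icc_succ_top (by omega), mul_add, ih, hα]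
    push_cast
    linear_combination -gammaRatio_succ hlam k

lemma beta_sq_mul_gammaRatio (hlam : -1 / 2 < lam) {k : ℕ} (hk : 1 ≤ k) :
    Gamma (2 * k + 1) * (2 * k + lam) / Gamma (2 * k + 2 * lam) * ((2 * k + 1) * gammaRatio lam k) =
      (2 * k + lam) * (2 * k + 2 * lam) := by
  have hk' : (1 : ℝ) ≤ k := by exact_mod_cast hk
  have hden : 2 * (k : ℝ) + 2 = 2 * k + 1 + 1 := by ring
  have hy : 0 < 2 * (k : ℝ) + 1 := by linarith
  calc _ = (2 * k + lam) * (2 * k + 1) * (Gamma (2 * k + 1) / Gamma (2 * k + 2 * lam) *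
        (Gamma (2 * k + 2 * lam + 1) / Gamma (2 * k + 1 + 1))) := by
          rw [gammaRatio, hden]; ring
    _ = (2 * k + lam) * (2 * k + 2 * lam) := by
          rw [Gamma_div_mul_Gamma_add_one_div (by linarith) hy]; field_simp

end

/-- Lemma 2.1 (ii): `β_k² ∑_{j=1}^k α_j² = 2k(k+λ)(2k+λ)/(2λ+1)`. -/
theorem beta_sq_mul_sum_alpha_sq (lam : ℝ) (hlam : lam > -1/2) (k : ℕ) (hk : 1 ≤ k) :
    (Real.Gamma (2*(k : ℝ) + 1) * (2*(k : ℝ) + lam) / Real.Gamma (2*(k : ℝ) + 2*lam)) *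
      ∑ j ∈ Finset.Icc 1 k,
        (2*(j : ℝ) + lam - 1) * Real.Gamma (2*(j : ℝ) + 2*lam - 1) / Real.Gamma (2*(j : ℝ))
      = 2*(k : ℝ)*((k : ℝ) + lam)*(2*(k : ℝ) + lam) / (2*lam + 1) := by
  rw [eq_div_iff (by linarith)]
  linear_combination Gamma (2 * k + 1) * (2 * k + lam) / Gamma (2 * k + 2 * lam) *
    mul_sum_Icc_alpha_sq hlam k + k * beta_sq_mul_gammaRatio hlam hk
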